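/- arXiv:0704.0095 — 5 statements merged into one kernel-verified Lean document; each statement's English description precedes it below -/
import Mathlib

section
/- Let ρ₁ and ρ₂ be two periodic pseudodistances on a locally compact group G. Then there is a constant C > 0 such that for all x, y ∈ G: (1/C)·ρ₂(x,y) − C ≤ ρ₁(x,y) ≤ C·ρ₂(x,y) + C. -/
open MeasureTheory Filter Topology Pointwise

/-- `ρ` is a pseudodistance: nonnegative, symmetric, and satisfies the triangle inequality. -/
def IsPseudoDist {G : Type*} [Group G] (ρ : G → G → ℝ) : Prop :=
  (∀ x y : G, 0 ≤ ρ x y) ∧ (∀ x y : G, ρ x y = ρ y x) ∧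
    ∀ x y z : G, ρ x z ≤ ρ x y + ρ y z

/-- `ρ` is locally bounded: it maps compact subsets of `G × G` to bounded sets of reals. -/
def IsLocallyBoundedDist {G : Type*} [Group G] [TopologicalSpace G] (ρ : G → G → ℝ) : Prop :=
  ∀ K : Set (G × G), IsCompact K → ∃ M : ℝ, ∀ p ∈ K, ρ p.1 p.2 ≤ M

/-- `ρ` is proper: balls around the identity are relatively compact. -/
def IsProperDist {G : Type*} [Group G] [TopologicalSpace G] (ρ : G → G → ℝ) : Prop :=
  ∀ t : ℝ, 0 < t → IsCompact (closure {y : G | ρ 1 y ≤ t})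

/-- `ρ` is asymptotically geodesic: for every `ε > 0` there is `s > 0` such that any two points
can be joined by a chain of points with consecutive distances at most `s` and total length at
most `(1 + ε)` times the distance. -/
def IsAsympGeodesic {G : Type*} [Group G] (ρ : G → G → ℝ) : Prop :=
  ∀ ε : ℝ, 0 < ε → ∃ s : ℝ, 0 < s ∧ ∀ x y : G, ∃ n : ℕ, ∃ c : ℕ → G,
    c 0 = x ∧ c n = y ∧ (∀ i < n, ρ (c i) (c (i + 1)) ≤ s) ∧
    ∑ i ∈ Finset.range n, ρ (c i) (c (i + 1)) ≤ (1 + ε) * ρ x y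

/-- A closed subgroup `H` of `G` is co-compact if `H · F = G` for some compact `F ⊆ G`. -/
def IsCocompactSubgroup {G : Type*} [Group G] [TopologicalSpace G] (H : Subgroup G) : Prop :=
  IsClosed (H : Set G) ∧ ∃ F : Set G, IsCompact F ∧ (H : Set G) * F = Set.univ

/-- A periodic pseudodistance on `G`: a locally bounded, proper, asymptotically geodesic
pseudodistance which is invariant under left translations by some closed co-compact subgroup. -/
def IsPeriodicPseudoDist {G : Type*} [Group G] [TopologicalSpace G] (ρ : G → G → ℝ) : Prop :=
  IsPseudoDist ρ ∧ IsLocallyBoundedDist ρ ∧ IsProperDist ρ ∧ IsAsympGeodesic ρ ∧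
    ∃ H : Subgroup G, IsCocompactSubgroup H ∧ ∀ h ∈ H, ∀ x y : G, ρ (h * x) (h * y) = ρ x y



/-!
Use an asymptotically geodesic chain for `ρ₂` from `x` to `y`: its steps are `ρ₂`-short and its
total `ρ₂`-length is at most `2 ρ₂(x, y)`. Cut it greedily into pieces of `ρ₂`-length at most `s`,
each followed by one more step; every piece except possibly the last has length more than `s`.
By co-compactness and properness, `ρ₂`-short pairs have displacement `x⁻¹ y` in a fixed compact
set, on which `ρ₁` is bounded by periodicity and local boundedness. Hence `ρ₁(x, y)` is at most a
constant times the number of pieces, i.e. affine in `ρ₂(x, y)`; by symmetry this gives both bounds.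
-/

open Finset

lemma exists_le_lt_succ_of_le_of_lt {β : Type*} [LinearOrder β] {f : ℕ → β} {s : β}
    (h₀ : f 0 ≤ s) :
    ∀ n, s < f n → ∃ k m, n = k + 1 + m ∧ f k ≤ s ∧ s < f (k + 1)
  | 0, h => absurd h₀ h.not_ge
  | n + 1, h => by
    by_cases hn : f n ≤ s
    · exact ⟨n, 0, rfl, hn, h⟩
    · obtain ⟨k, m, rfl, hk⟩ := exists_le_lt_succ_of_le_of_lt h₀ n (not_le.mp hn)
      exact ⟨k, m + 1, rfl, hk⟩

section Chain

variable {α : Type*}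

def chainLength (ρ : α → α → ℝ) (c : ℕ → α) (n : ℕ) : ℝ :=
  ∑ i ∈ range n, ρ (c i) (c (i + 1))

@[simp]
lemma chainLength_zero (ρ : α → α → ℝ) (c : ℕ → α) : chainLength ρ c 0 = 0 := rfl

lemma chainLength_succ (ρ : α → α → ℝ) (c : ℕ → α) (n : ℕ) :
    chainLength ρ c (n + 1) = chainLength ρ c n + ρ (c n) (c (n + 1)) :=
  sum_range_succ _ _

lemma chainLength_add (ρ : α → α → ℝ) (c : ℕ → α) (m n : ℕ) :
    chainLength ρ c (m + n) = chainLength ρ c m + chainLength ρ (fun i => c (m + i)) n := by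
  simp only [chainLength, sum_range_add, add_assoc]

lemma chainLength_nonneg {ρ : α → α → ℝ} (hρ : ∀ x y, 0 ≤ ρ x y) (c : ℕ → α) (n : ℕ) :
    0 ≤ chainLength ρ c n :=
  sum_nonneg fun _ _ => hρ _ _

lemma le_chainLength {ρ : α → α → ℝ} (htri : ∀ x y z, ρ x z ≤ ρ x y + ρ y z) (c : ℕ → α) :
    ∀ n, ρ (c 0) (c (n + 1)) ≤ chainLength ρ c (n + 1)
  | 0 => by simp [chainLength_succ]
  | n + 1 => by
    rw [chainLength_succ]
    linarith [htri (c 0) (c (n + 1)) (c (n + 2)), le_chainLength htri c n]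

variable {ρ₁ ρ₂ : α → α → ℝ} {s M : ℝ}

lemma le_of_chainLength_le (htri₂ : ∀ x y z, ρ₂ x z ≤ ρ₂ x y + ρ₂ y z)
    (hM : ∀ x y, ρ₂ x y ≤ s → ρ₁ x y ≤ M) (hdiag : ∀ x, ρ₁ x x ≤ M) (c : ℕ → α) :
    ∀ {n}, chainLength ρ₂ c n ≤ s → ρ₁ (c 0) (c n) ≤ M
  | 0, _ => hdiag _
  | n + 1, h => hM _ _ ((le_chainLength htri₂ c n).trans h)

theorem le_mul_chainLength_add (htri₁ : ∀ x y z, ρ₁ x z ≤ ρ₁ x y + ρ₁ y z)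
    (hnonneg₂ : ∀ x y, 0 ≤ ρ₂ x y) (htri₂ : ∀ x y z, ρ₂ x z ≤ ρ₂ x y + ρ₂ y z)
    (hs : 0 < s) (hM₀ : 0 ≤ M) (hM : ∀ x y, ρ₂ x y ≤ s → ρ₁ x y ≤ M)
    (hdiag : ∀ x, ρ₁ x x ≤ M) (n : ℕ) (c : ℕ → α) (hc : ∀ i < n, ρ₂ (c i) (c (i + 1)) ≤ s) :
    ρ₁ (c 0) (c n) ≤ 2 * M / s * chainLength ρ₂ c n + M := by
  induction n using Nat.strong_induction_on generalizing c with
  | _ n ih =>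
  have hcoef : 0 ≤ 2 * M / s := by positivity
  by_cases hshort : chainLength ρ₂ c n ≤ s
  · have := mul_nonneg hcoef (chainLength_nonneg hnonneg₂ c n)
    linarith [le_of_chainLength_le htri₂ hM hdiag c hshort]
  obtain ⟨k, m, rfl, hprefix, hcross⟩ := exists_le_lt_succ_of_le_of_lt
    (f := chainLength ρ₂ c) (by simpa using hs.le) n (not_le.mp hshort)
  have hhead : ρ₁ (c 0) (c k) ≤ M := le_of_chainLength_le htri₂ hM hdiag c hprefix
  have hstep : ρ₁ (c k) (c (k + 1)) ≤ M := hM _ _ (hc k (by omega))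
  have htail := ih m (by omega) (fun i => c (k + 1 + i)) fun i hi => hc _ (by omega)
  simp only [add_zero] at htail
  have hpiece : 2 * M ≤ 2 * M / s * chainLength ρ₂ c (k + 1) := by
    calc 2 * M = 2 * M / s * s := by field_simp
      _ ≤ _ := by gcongr
  rw [chainLength_add]
  linarith [htri₁ (c 0) (c k) (c (k + 1 + m)), htri₁ (c k) (c (k + 1)) (c (k + 1 + m))]

end Chain

section Periodic

variable {G : Type*} [Group G] [TopologicalSpace G] [ContinuousMul G] {ρ : G → G → ℝ}
  {H : Subgroup G}

lemma IsLocallyBoundedDist.exists_le_of_inv_mul_mem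
    (hlb : IsLocallyBoundedDist ρ) (hH : IsCocompactSubgroup H)
    (hinv : ∀ h ∈ H, ∀ x y, ρ (h * x) (h * y) = ρ x y) {K : Set G} (hK : IsCompact K) :
    ∃ M, ∀ x y, x⁻¹ * y ∈ K → ρ x y ≤ M := by
  obtain ⟨-, F, hF, hHF⟩ := hH
  obtain ⟨M, hM⟩ := hlb (F ×ˢ (F * K)) (hF.prod (hF.mul hK))
  refine ⟨M, fun x y hxy => ?_⟩
  obtain ⟨h, hh, f, hf, rfl⟩ := Set.mem_mul.mp (hHF ▸ Set.mem_univ x)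
  have hy : h⁻¹ * y = f * ((h * f)⁻¹ * y) := by group
  calc ρ (h * f) y = ρ f (h⁻¹ * y) := by rw [← hinv h hh f, mul_inv_cancel_left]
    _ ≤ M := hM (f, h⁻¹ * y) ⟨hf, hy ▸ Set.mul_mem_mul hf hxy⟩

lemma IsProperDist.exists_isCompact_inv_mul_mem [ContinuousInv G]
    (hprop : IsProperDist ρ) (hρ : IsPseudoDist ρ) (hlb : IsLocallyBoundedDist ρ)
    (hH : IsCocompactSubgroup H) (hinv : ∀ h ∈ H, ∀ x y, ρ (h * x) (h * y) = ρ x y) (s : ℝ) :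
    ∃ K : Set G, IsCompact K ∧ ∀ x y, ρ x y ≤ s → x⁻¹ * y ∈ K := by
  obtain ⟨-, F, hF, hHF⟩ := hH
  obtain ⟨a, ha⟩ := hlb (({1} : Set G) ×ˢ F) (isCompact_singleton.prod hF)
  set t := max (a + s) 1
  refine ⟨F⁻¹ * closure {z | ρ 1 z ≤ t}, hF.inv.mul (hprop t (by positivity)),
    fun x y hxy => ?_⟩
  obtain ⟨h, hh, f, hf, rfl⟩ := Set.mem_mul.mp (hHF ▸ Set.mem_univ x)
  have hfy : ρ f (h⁻¹ * y) ≤ s := by rwa [← hinv h hh, mul_inv_cancel_left]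
  have hy : ρ 1 (h⁻¹ * y) ≤ t := by
    linarith [hρ.2.2 1 f (h⁻¹ * y), ha (1, f) ⟨rfl, hf⟩, le_max_left (a + s) 1]
  rw [mul_inv_rev, mul_assoc]
  exact Set.mul_mem_mul (Set.inv_mem_inv.mpr hf) (subset_closure hy)

variable [ContinuousInv G] {ρ₁ ρ₂ : G → G → ℝ}

theorem IsPeriodicPseudoDist.exists_le_mul_add (h₁ : IsPeriodicPseudoDist ρ₁)
    (h₂ : IsPeriodicPseudoDist ρ₂) : ∃ C, ∀ x y, ρ₁ x y ≤ C * ρ₂ x y + C := by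
  obtain ⟨hpd₁, hlb₁, -, -, H₁, hH₁, hinv₁⟩ := h₁
  obtain ⟨hpd₂, hlb₂, hprop₂, hgeod₂, H₂, hH₂, hinv₂⟩ := h₂
  obtain ⟨s, hs, hchain⟩ := hgeod₂ 1 one_pos
  obtain ⟨K, hK, hKmem⟩ := hprop₂.exists_isCompact_inv_mul_mem hpd₂ hlb₂ hH₂ hinv₂ s
  obtain ⟨M, hM⟩ :=
    hlb₁.exists_le_of_inv_mul_mem hH₁ hinv₁ (hK.union (isCompact_singleton (x := 1)))
  have hdiag : ∀ x, ρ₁ x x ≤ M := fun x => hM x x (by simp)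
  have hM₀ : 0 ≤ M := (hpd₁.1 1 1).trans (hdiag 1)
  refine ⟨max (4 * M / s) M, fun x y => ?_⟩
  obtain ⟨n, c, rfl, rfl, hsteps, hlen⟩ := hchain x y
  have hρ₂ := hpd₂.1 (c 0) (c n)
  calc ρ₁ (c 0) (c n) ≤ 2 * M / s * chainLength ρ₂ c n + M :=
        le_mul_chainLength_add hpd₁.2.2 hpd₂.1 hpd₂.2.2 hs hM₀
          (fun x y h => hM x y (Or.inl (hKmem x y h))) hdiag n c hsteps
    _ ≤ 2 * M / s * ((1 + 1) * ρ₂ (c 0) (c n)) + M := by gcongr; exact hlen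
    _ = 4 * M / s * ρ₂ (c 0) (c n) + M := by ring
    _ ≤ _ := by gcongr; exacts [le_max_left _ _, le_max_right _ _]

end Periodic

theorem coarse_equivalence_of_periodic_pseudodistances_general
    {G : Type*} [Group G] [TopologicalSpace G] [IsTopologicalGroup G]
    (ρ₁ ρ₂ : G → G → ℝ)
    (h₁ : IsPeriodicPseudoDist ρ₁) (h₂ : IsPeriodicPseudoDist ρ₂) :
    ∃ C : ℝ, 0 < C ∧ ∀ x y : G,
      (1 / C) * ρ₂ x y - C ≤ ρ₁ x y ∧ ρ₁ x y ≤ C * ρ₂ x y + C := by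
  obtain ⟨C₁, hC₁⟩ := h₁.exists_le_mul_add h₂
  obtain ⟨C₂, hC₂⟩ := h₂.exists_le_mul_add h₁
  set C := max (max C₁ C₂) 1
  have hC₁C : C₁ ≤ C := (le_max_left _ _).trans (le_max_left _ _)
  have hC₂C : C₂ ≤ C := (le_max_right _ _).trans (le_max_left _ _)
  have hC : 1 ≤ C := le_max_right _ _
  refine ⟨C, by positivity, fun x y => ⟨?_, ?_⟩⟩
  · have hρ₂ : ρ₂ x y ≤ C * (ρ₁ x y + 1) := by
      nlinarith [hC₂ x y, h₁.1.1 x y]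
    rw [one_div_mul_eq_div]
    linarith [(div_le_iff₀' (by linarith)).mpr hρ₂]
  · nlinarith [hC₁ x y, h₂.1.1 x y]

/-- **Coarse equivalence of periodic pseudodistances** (Proposition 4.1). Any two periodic
pseudodistances `ρ₁`, `ρ₂` on a locally compact group `G` satisfy
`(1/C)·ρ₂(x,y) − C ≤ ρ₁(x,y) ≤ C·ρ₂(x,y) + C` for some constant `C > 0`. -/
theorem coarse_equivalence_of_periodic_pseudodistances
    {G : Type*} [Group G] [TopologicalSpace G] [IsTopologicalGroup G] [LocallyCompactSpace G]
    (ρ₁ ρ₂ : G → G → ℝ)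
    (h₁ : IsPeriodicPseudoDist ρ₁) (h₂ : IsPeriodicPseudoDist ρ₂) :
    ∃ C : ℝ, 0 < C ∧ ∀ x y : G,
      (1 / C) * ρ₂ x y - C ≤ ρ₁ x y ∧ ρ₁ x y ≤ C * ρ₂ x y + C :=
  coarse_equivalence_of_periodic_pseudodistances_general ρ₁ ρ₂ h₁ h₂
end

section
/- Let G be a locally compact group, ρ a periodic pseudodistance on G, and K a compact subgroup of G. Then there is a constant C₀ > 0, depending only on ρ and K, such that |ρ(xk₁, yk₂) − ρ(x,y)| ≤ C₀ for all k₁, k₂ ∈ K and all x, y ∈ G. -/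
open MeasureTheory Filter Topology Pointwise

/-! Cover `G` by `H`-translates of a compact set `F`. Since `ρ` is `H`-invariant,
`ρ(x, xk)` for `x = hf` equals `ρ(f, fk)`, which is bounded because `(f, fk)` ranges over a
compact subset of `G × G`. The quadrilateral inequality then bounds the change of `ρ` under right
translation by twice that constant. -/

theorem IsPseudoDist.abs_sub_le_add {G : Type*} [Group G] {ρ : G → G → ℝ} (hρ : IsPseudoDist ρ)
    (x x' y y' : G) : |ρ x' y' - ρ x y| ≤ ρ x x' + ρ y y' := by
  obtain ⟨-, hsym, htri⟩ := hρ
  rw [abs_sub_le_iff]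
  constructor
  · linarith [htri x' x y', htri x y y', hsym x' x]
  · linarith [htri x x' y, htri x' y' y, hsym y' y]

theorem IsLocallyBoundedDist.exists_forall_dist_mul_le {G : Type*} [Group G] [TopologicalSpace G]
    [ContinuousMul G] {ρ : G → G → ℝ} (hlb : IsLocallyBoundedDist ρ) {H : Subgroup G}
    (hinv : ∀ h ∈ H, ∀ x y : G, ρ (h * x) (h * y) = ρ x y) {F : Set G} (hF : IsCompact F)
    (hHF : (H : Set G) * F = Set.univ) {K : Set G} (hK : IsCompact K) :
    ∃ M : ℝ, ∀ x : G, ∀ k ∈ K, ρ x (x * k) ≤ M := by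
  obtain ⟨M, hM⟩ := hlb _ ((hF.prod hK).image (f := fun p : G × G => (p.1, p.1 * p.2))
    (by fun_prop))
  refine ⟨M, fun x k hk => ?_⟩
  obtain ⟨h, hh, f, hf, rfl⟩ : x ∈ (H : Set G) * F := hHF ▸ Set.mem_univ x
  calc ρ (h * f) (h * f * k) = ρ f (f * k) := by rw [mul_assoc, hinv h hh]
    _ ≤ M := hM (f, f * k) ⟨(f, k), Set.mk_mem_prod hf hk, rfl⟩

theorem periodic_pseudodistance_right_compact_bounded_general
    {G : Type*} [Group G] [TopologicalSpace G] [IsTopologicalGroup G]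
    (ρ : G → G → ℝ) (hρ : IsPeriodicPseudoDist ρ)
    (K : Subgroup G) (hK : IsCompact (K : Set G)) :
    ∃ C₀ : ℝ, 0 < C₀ ∧ ∀ k₁ ∈ K, ∀ k₂ ∈ K, ∀ x y : G,
      |ρ (x * k₁) (y * k₂) - ρ x y| ≤ C₀ := by
  obtain ⟨hpd, hlb, -, -, H, ⟨-, F, hF, hHF⟩, hinv⟩ := hρ
  obtain ⟨M, hM⟩ := hlb.exists_forall_dist_mul_le hinv hF hHF hK
  refine ⟨2 * max M 0 + 1, by positivity, fun k₁ hk₁ k₂ hk₂ x y => ?_⟩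
  calc |ρ (x * k₁) (y * k₂) - ρ x y| ≤ ρ x (x * k₁) + ρ y (y * k₂) := hpd.abs_sub_le_add ..
    _ ≤ 2 * max M 0 + 1 := by linarith [hM x k₁ hk₁, hM y k₂ hk₂, le_max_left M 0]

/-- **Right translations by a compact subgroup move periodic pseudodistances boundedly**
(Lemma 4.6). If `ρ` is a periodic pseudodistance on a locally compact group `G` and `K` is a
compact subgroup of `G`, then there is `C₀ > 0`, depending only on `ρ` and `K`, with
`|ρ(xk₁, yk₂) − ρ(x,y)| ≤ C₀` for all `k₁, k₂ ∈ K` and all `x, y ∈ G`. -/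
theorem periodic_pseudodistance_right_compact_bounded
    {G : Type*} [Group G] [TopologicalSpace G] [IsTopologicalGroup G] [LocallyCompactSpace G]
    (ρ : G → G → ℝ) (hρ : IsPeriodicPseudoDist ρ)
    (K : Subgroup G) (hK : IsCompact (K : Set G)) :
    ∃ C₀ : ℝ, 0 < C₀ ∧ ∀ k₁ ∈ K, ∀ k₂ ∈ K, ∀ x y : G,
      |ρ (x * k₁) (y * k₂) - ρ x y| ≤ C₀ :=
  periodic_pseudodistance_right_compact_bounded_general ρ hρ K hK
end

section
/- Let G be a locally compact group, K a compact subgroup of G, and ρ a periodic pseudodistance on G which is Borel measurable. Define ρ^K(x,y) = ∫_{K×K} ρ(xk₁, yk₂) dk₁ dk₂, where dk is the normalized Haar probability measure on K. Then ρ^K is a periodic pseudodistance on G, ρ^K lies at a bounded distance from ρ (i.e. sup_{x,y∈G} |ρ^K(x,y) − ρ(x,y)| < ∞), and ρ^K(e,x)/ρ(e,x) → 1 as x → ∞ in G (i.e. for every ε > 0 there is a compact set L ⊆ G such that |ρ^K(e,x)/ρ(e,x) − 1| ≤ ε for all x ∉ L). -/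
open MeasureTheory Filter Topology Pointwise

/-!
Periodicity and local boundedness give a uniform bound `M` on `ρ(x, xk)` for `k ∈ K`, so the
average moves `ρ` by at most `2M`. Being locally bounded and proper survives such a bounded
perturbation, and so does being asymptotically geodesic: a `ρ`-chain with small steps is coarsened
into blocks of `ρ`-length about `S`, each of which costs an extra `M` only, i.e. a factor `1 + M/S`
overall. Finally `|ρ^K(e,x) - ρ(e,x)| ≤ 2M` while `ρ(e,x) → ∞` by properness.
-/

open Function

section PseudoDist

variable {G : Type*} [Group G] {ρ : G → G → ℝ}

namespace IsPseudoDist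

protected theorem nonneg (hρ : IsPseudoDist ρ) (x y : G) : 0 ≤ ρ x y := hρ.1 x y

protected theorem symm (hρ : IsPseudoDist ρ) (x y : G) : ρ x y = ρ y x := hρ.2.1 x y

protected theorem triangle (hρ : IsPseudoDist ρ) (x y z : G) : ρ x z ≤ ρ x y + ρ y z := hρ.2.2 x y z

theorem abs_sub_right_le (hρ : IsPseudoDist ρ) (x y y' : G) : |ρ x y' - ρ x y| ≤ ρ y y' := by
  rw [abs_le]
  constructor
  · linarith [hρ.triangle x y' y, hρ.symm y y']
  · linarith [hρ.triangle x y y']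

theorem abs_sub_le (hρ : IsPseudoDist ρ) (x x' y y' : G) : |ρ x' y' - ρ x y| ≤ ρ x x' + ρ y y' := by
  have h := hρ.abs_sub_right_le x' y y'
  have h' := hρ.abs_sub_right_le y x x'
  rw [hρ.symm y x, hρ.symm y x'] at h'
  calc |ρ x' y' - ρ x y| ≤ |ρ x' y' - ρ x' y| + |ρ x' y - ρ x y| := _root_.abs_sub_le _ _ _
    _ ≤ ρ x x' + ρ y y' := by linarith

theorem le_sum_range_sub_sum_range (hρ : IsPseudoDist ρ) (c : ℕ → G) {j i : ℕ} (hji : j < i) :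
    ρ (c j) (c i) ≤ ∑ k ∈ Finset.range i, ρ (c k) (c (k + 1)) -
      ∑ k ∈ Finset.range j, ρ (c k) (c (k + 1)) := by
  induction i with
  | zero => omega
  | succ i ih =>
    rw [Finset.sum_range_succ]
    rcases (Nat.lt_succ_iff.1 hji).lt_or_eq with hji | rfl
    · linarith [ih hji, hρ.triangle (c j) (c i) (c (i + 1))]
    · linarith

end IsPseudoDist

end PseudoDist

section Chain

variable {G : Type*} {ρ σ : G → G → ℝ} {s t t' M S : ℝ} {x y z : G}

def ChainJoins (ρ : G → G → ℝ) (s : ℝ) (x y : G) (t : ℝ) : Prop :=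
  ∃ n : ℕ, ∃ c : ℕ → G, c 0 = x ∧ c n = y ∧ (∀ i < n, ρ (c i) (c (i + 1)) ≤ s) ∧
    ∑ i ∈ Finset.range n, ρ (c i) (c (i + 1)) ≤ t

theorem isAsympGeodesic_iff_chainJoins [Group G] :
    IsAsympGeodesic ρ ↔ ∀ ε : ℝ, 0 < ε → ∃ s : ℝ, 0 < s ∧ ∀ x y : G,
      ChainJoins ρ s x y ((1 + ε) * ρ x y) :=
  Iff.rfl

namespace ChainJoins

theorem refl (ht : 0 ≤ t) : ChainJoins ρ s x x t :=
  ⟨0, fun _ => x, rfl, rfl, by simp, by simpa using ht⟩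

theorem single (hs : ρ x y ≤ s) (ht : ρ x y ≤ t) : ChainJoins ρ s x y t :=
  ⟨1, fun i => if i = 0 then x else y, rfl, rfl, by simpa using hs, by simpa using ht⟩

theorem mono {s' : ℝ} (h : ChainJoins ρ s x y t) (hs : s ≤ s') (ht : t ≤ t') :
    ChainJoins ρ s' x y t' := by
  obtain ⟨n, c, hc0, hcn, hstep, hsum⟩ := h
  exact ⟨n, c, hc0, hcn, fun i hi => (hstep i hi).trans hs, hsum.trans ht⟩

theorem trans (h₁ : ChainJoins ρ s x y t) (h₂ : ChainJoins ρ s y z t') :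
    ChainJoins ρ s x z (t + t') := by
  obtain ⟨n, c, hc0, hcn, hcs, hct⟩ := h₁
  obtain ⟨m, d, hd0, hdm, hds, hdt⟩ := h₂
  set e : ℕ → G := fun i => if i ≤ n then c i else d (i - n)
  have he_left : ∀ i ≤ n, e i = c i := fun i hi => if_pos hi
  have he_right : ∀ j, e (n + j) = d j := by
    rintro (_ | j)
    · simp [e, hcn, hd0]
    · simp [e]
  have he_step : ∀ j, ρ (e (n + j)) (e (n + j + 1)) = ρ (d j) (d (j + 1)) := fun j => by
    rw [he_right, add_assoc, he_right]
  have he_init : ∀ i < n, ρ (e i) (e (i + 1)) = ρ (c i) (c (i + 1)) := fun i hi => by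
    rw [he_left i hi.le, he_left (i + 1) hi]
  refine ⟨n + m, e, by rw [he_left 0 n.zero_le, hc0], by rw [he_right, hdm], ?_, ?_⟩
  · intro i hi
    rcases lt_or_ge i n with hin | hin
    · rw [he_init i hin]; exact hcs i hin
    · obtain ⟨j, rfl⟩ := Nat.exists_eq_add_of_le hin
      rw [he_step]; exact hds j (by omega)
  · rw [Finset.sum_range_add, Finset.sum_congr rfl fun i hi => he_init i (Finset.mem_range.1 hi),
      Finset.sum_congr rfl fun j _ => he_step j]
    linarith

/-- Coarsening: cut the `ρ`-chain into blocks of `ρ`-length between `S` and `2S` and jump over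
each block in one step; each jump costs at most `M` more than its block, and there are at most
`t / S` blocks plus a final one. -/
theorem of_le_add [Group G] (hρ : IsPseudoDist ρ) (hσ : ∀ x y, σ x y ≤ ρ x y + M) (hM : 0 ≤ M)
    (hS : 0 < S) (h : ChainJoins ρ S x y t) :
    ChainJoins σ (2 * S + M) x y ((1 + M / S) * t + M) := by
  obtain ⟨n, c, rfl, rfl, hstep, hsum⟩ := h
  set L : ℕ → ℝ := fun i => ∑ k ∈ Finset.range i, ρ (c k) (c (k + 1))
  have hL_succ : ∀ i, L (i + 1) = L i + ρ (c i) (c (i + 1)) := fun i => Finset.sum_range_succ _ _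
  have hL_mono : Monotone L := fun i j hij =>
    Finset.sum_le_sum_of_subset_of_nonneg (Finset.range_mono hij) fun _ _ _ => hρ.nonneg _ _
  have hMS : 0 ≤ M / S := div_nonneg hM hS.le
  have hblocks : ∀ i ≤ n, ∃ j ≤ i,
      ChainJoins σ (2 * S + M) (c 0) (c j) ((1 + M / S) * L j) ∧ L i - L j ≤ S := by
    intro i
    induction i with
    | zero => exact fun _ => ⟨0, le_rfl, refl (by simp [L]), by simp [hS.le]⟩
    | succ i ih =>
      intro hi
      obtain ⟨j, hji, hj, hblock⟩ := ih (by omega)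
      have hlast := hstep i (by omega)
      by_cases hsmall : L (i + 1) - L j ≤ S
      · exact ⟨j, by omega, hj, hsmall⟩
      refine ⟨i + 1, le_rfl, ?_, by simp [hS.le]⟩
      have hjump := hρ.le_sum_range_sub_sum_range c (Nat.lt_succ_of_le hji)
      have hMle : M ≤ M / S * (L (i + 1) - L j) := by
        rw [div_mul_eq_mul_div, le_div_iff₀ hS]
        exact mul_le_mul_of_nonneg_left (not_le.1 hsmall).le hM
      refine (hj.trans (single (t := (1 + M / S) * (L (i + 1) - L j)) ?_ ?_)).mono le_rfl
        (by ring_nf; exact le_rfl)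
      · linarith [hσ (c j) (c (i + 1)), hL_succ i]
      · linarith [hσ (c j) (c (i + 1))]
  obtain ⟨j, hjn, hj, hblock⟩ := hblocks n le_rfl
  have hLt : (1 + M / S) * L n ≤ (1 + M / S) * t := by gcongr
  rcases hjn.lt_or_eq with hjn | rfl
  · have hjump := hρ.le_sum_range_sub_sum_range c hjn
    have hLj : 0 ≤ M / S * (L n - L j) := mul_nonneg hMS (by linarith [hL_mono hjn.le])
    refine (hj.trans (single (t := L n - L j + M) ?_ ?_)).mono le_rfl ?_
    · linarith [hσ (c j) (c n)]
    · linarith [hσ (c j) (c n)]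
    · linarith
  · exact hj.mono le_rfl (by linarith)

end ChainJoins

end Chain

section BoundedPerturbation

variable {G : Type*} [Group G] {ρ σ : G → G → ℝ} {M : ℝ}

theorem IsAsympGeodesic.of_abs_sub_le (hρ : IsPseudoDist ρ) (hgeo : IsAsympGeodesic ρ)
    (hσ : ∀ x y, 0 ≤ σ x y) (hdist : ∀ x y, |σ x y - ρ x y| ≤ M) : IsAsympGeodesic σ := by
  have hM : 0 ≤ M := (abs_nonneg _).trans (hdist 1 1)
  have hσρ : ∀ x y, σ x y ≤ ρ x y + M := fun x y => by linarith [(abs_le.1 (hdist x y)).2]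
  have hρσ : ∀ x y, ρ x y ≤ σ x y + M := fun x y => by linarith [(abs_le.1 (hdist x y)).1]
  rw [isAsympGeodesic_iff_chainJoins] at hgeo ⊢
  intro ε hε
  set δ := min ε 1 / 4 with hδ
  have hδ0 : 0 < δ := by positivity
  have hδε : 4 * δ ≤ ε := by linarith [min_le_left ε 1]
  have hδ1 : 4 * δ ≤ 1 := by linarith [min_le_right ε 1]
  obtain ⟨s, hs, hchain⟩ := hgeo δ hδ0
  set S := max s (M / δ)
  have hS : 0 < S := hs.trans_le (le_max_left _ _)
  have hMS : M / S ≤ δ := div_le_of_le_mul₀ hS.le hδ0.le (by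
    rw [← div_le_iff₀' hδ0]; exact le_max_right _ _)
  -- Short distances are covered by one step; on long ones the additive error `M` is negligible.
  set T := 3 * M / δ
  refine ⟨max (2 * S + M) T, by positivity, fun x y => ?_⟩
  by_cases hxy : σ x y ≤ T
  · exact ChainJoins.single (hxy.trans (le_max_right _ _)) (by nlinarith [hσ x y])
  have hT : 3 * M ≤ δ * σ x y := by
    rw [← div_le_iff₀' hδ0]; exact (not_le.1 hxy).le
  have hchainS := (hchain x y).mono (le_max_left s (M / δ)) le_rfl
  refine (hchainS.of_le_add hρ hσρ hM hS).mono (le_max_left _ _) ?_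
  have hρ0 := hρ.nonneg x y
  have hσ0 := hσ x y
  calc (1 + M / S) * ((1 + δ) * ρ x y) + M ≤ (1 + δ) * ((1 + δ) * ρ x y) + M := by gcongr
    _ ≤ (1 + 3 * δ) * ρ x y + M := by
      nlinarith [mul_nonneg (mul_nonneg hδ0.le hρ0) (by linarith : 0 ≤ 1 - δ)]
    _ ≤ (1 + 3 * δ) * (σ x y + M) + M := by gcongr; exact hρσ x y
    _ ≤ (1 + 4 * δ) * σ x y := by nlinarith
    _ ≤ (1 + ε) * σ x y := by gcongr

variable [TopologicalSpace G]

theorem IsLocallyBoundedDist.of_le_add (hρ : IsLocallyBoundedDist ρ)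
    (h : ∀ x y, σ x y ≤ ρ x y + M) : IsLocallyBoundedDist σ := fun C hC => by
  obtain ⟨B, hB⟩ := hρ C hC
  exact ⟨B + M, fun p hp => (h _ _).trans (by linarith [hB p hp])⟩

theorem IsProperDist.of_le_add (hρ : IsProperDist ρ) (hM : 0 ≤ M)
    (h : ∀ x y, ρ x y ≤ σ x y + M) : IsProperDist σ := fun t ht =>
  (hρ (t + M) (by linarith)).of_isClosed_subset isClosed_closure
    (closure_mono fun y (hy : σ 1 y ≤ t) => show ρ 1 y ≤ t + M by linarith [h 1 y])

theorem IsPeriodicPseudoDist.of_abs_sub_le (hρ : IsPeriodicPseudoDist ρ) (hσ : IsPseudoDist σ)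
    (hdist : ∀ x y, |σ x y - ρ x y| ≤ M)
    (hinv : ∀ g : G, (∀ x y, ρ (g * x) (g * y) = ρ x y) → ∀ x y, σ (g * x) (g * y) = σ x y) :
    IsPeriodicPseudoDist σ := by
  obtain ⟨hpd, hlb, hprop, hgeo, H, hH, hρH⟩ := hρ
  have hM : 0 ≤ M := (abs_nonneg _).trans (hdist 1 1)
  have hσρ : ∀ x y, σ x y ≤ ρ x y + M := fun x y => by linarith [(abs_le.1 (hdist x y)).2]
  have hρσ : ∀ x y, ρ x y ≤ σ x y + M := fun x y => by linarith [(abs_le.1 (hdist x y)).1]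
  exact ⟨hσ, hlb.of_le_add hσρ, hprop.of_le_add hM hρσ, hgeo.of_abs_sub_le hpd hσ.nonneg hdist,
    H, hH, fun h hh => hinv h (hρH h hh)⟩

theorem IsProperDist.exists_isCompact_abs_div_sub_one_le (hρ : IsProperDist ρ)
    (hdist : ∀ x y, |σ x y - ρ x y| ≤ M) {ε : ℝ} (hε : 0 < ε) :
    ∃ L : Set G, IsCompact L ∧ ∀ x ∉ L, |σ 1 x / ρ 1 x - 1| ≤ ε := by
  set t := max (M / ε) 1
  refine ⟨closure {y | ρ 1 y ≤ t}, hρ t (by positivity), fun x hx => ?_⟩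
  have hxt : t < ρ 1 x := not_le.1 fun h => hx (subset_closure h)
  have hpos : 0 < ρ 1 x := (by positivity : 0 < t).trans hxt
  rw [div_sub_one hpos.ne', abs_div, abs_of_pos hpos, div_le_iff₀ hpos]
  calc |σ 1 x - ρ 1 x| ≤ M := hdist 1 x
    _ ≤ ε * ρ 1 x := by
      rw [← div_le_iff₀' hε]; exact (le_max_left _ _).trans hxt.le

theorem IsPeriodicPseudoDist.exists_bound_mul [ContinuousMul G] (hρ : IsPeriodicPseudoDist ρ)
    {C : Set G} (hC : IsCompact C) : ∃ M : ℝ, ∀ x : G, ∀ k ∈ C, ρ x (x * k) ≤ M := by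
  obtain ⟨-, hlb, -, -, H, ⟨-, F, hF, hHF⟩, hρH⟩ := hρ
  obtain ⟨M, hM⟩ := hlb _ (hF.prod (hF.mul hC))
  refine ⟨M, fun x k hk => ?_⟩
  obtain ⟨h, hh, f, hf, rfl⟩ : x ∈ (H : Set G) * F := hHF ▸ Set.mem_univ x
  rw [mul_assoc, hρH h hh]
  exact hM (f, f * k) ⟨hf, Set.mul_mem_mul hf hk⟩

end BoundedPerturbation

section Integral

variable {α : Type*} [MeasurableSpace α] {μ : Measure α} {f : α → ℝ} {c r : ℝ}

theorem integrable_of_ae_abs_sub_le [IsFiniteMeasure μ] (hf : AEStronglyMeasurable f μ)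
    (h : ∀ᵐ a ∂μ, |f a - c| ≤ r) : Integrable f μ :=
  (integrable_const (|c| + r)).mono' hf <| h.mono fun a ha => by
    rw [Real.norm_eq_abs]; linarith [abs_sub_abs_le_abs_sub (f a) c]

theorem abs_integral_sub_le_of_ae [IsProbabilityMeasure μ] (hf : AEStronglyMeasurable f μ)
    (h : ∀ᵐ a ∂μ, |f a - c| ≤ r) : |∫ a, f a ∂μ - c| ≤ r := by
  have hsub : ∫ a, f a ∂μ - c = ∫ a, (f a - c) ∂μ := by
    rw [integral_sub (integrable_of_ae_abs_sub_le hf h) (integrable_const c)]; simp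
  simpa [hsub] using norm_integral_le_of_norm_le_const (μ := μ) (f := fun a => f a - c) h

end Integral

/-- The paper's `ρ^K`, for `ν` the normalized Haar measure of `K`. -/
noncomputable def averagedDist {G : Type*} [Group G] [MeasurableSpace G] (ν : Measure G)
    (ρ : G → G → ℝ) (x y : G) : ℝ :=
  ∫ k₁, ∫ k₂, ρ (x * k₁) (y * k₂) ∂ν ∂ν

section AveragedDist

variable {G : Type*} [Group G] [MeasurableSpace G] {ρ : G → G → ℝ} {ν : Measure G} {M : ℝ}

theorem averagedDist_mul_left {g : G} (hg : ∀ x y, ρ (g * x) (g * y) = ρ x y) (x y : G) :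
    averagedDist ν ρ (g * x) (g * y) = averagedDist ν ρ x y := by
  simp only [averagedDist, mul_assoc, hg]

theorem ae_abs_dist_mul_sub_le (hρ : IsPseudoDist ρ) (hν : ∀ᵐ k ∂ν, ∀ x, ρ x (x * k) ≤ M)
    (x y : G) : ∀ᵐ p ∂ν.prod ν, |ρ (x * p.1) (y * p.2) - ρ x y| ≤ M + M := by
  filter_upwards [Measure.quasiMeasurePreserving_fst.ae hν,
    Measure.quasiMeasurePreserving_snd.ae hν] with p h₁ h₂
  exact (hρ.abs_sub_le x (x * p.1) y (y * p.2)).trans (add_le_add (h₁ x) (h₂ y))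

variable [MeasurableMul G] [IsProbabilityMeasure ν]

theorem integrable_dist_mul (hρ : IsPseudoDist ρ) (hmeas : Measurable (uncurry ρ))
    (hν : ∀ᵐ k ∂ν, ∀ x, ρ x (x * k) ≤ M) (a b : G) :
    Integrable (fun k => ρ a (b * k)) ν :=
  integrable_of_ae_abs_sub_le (c := ρ a b)
    (hmeas.comp (measurable_const.prodMk (measurable_const_mul b))).aestronglyMeasurable
    (hν.mono fun k hk => (hρ.abs_sub_right_le a b (b * k)).trans (hk b))

theorem integrable_dist_mul_prod (hρ : IsPseudoDist ρ) (hmeas : Measurable (uncurry ρ))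
    (hν : ∀ᵐ k ∂ν, ∀ x, ρ x (x * k) ≤ M) (x y : G) :
    Integrable (fun p : G × G => ρ (x * p.1) (y * p.2)) (ν.prod ν) :=
  integrable_of_ae_abs_sub_le (hmeas.comp (((measurable_const_mul x).comp measurable_fst).prodMk
    ((measurable_const_mul y).comp measurable_snd))).aestronglyMeasurable
    (ae_abs_dist_mul_sub_le hρ hν x y)

theorem abs_averagedDist_sub_le (hρ : IsPseudoDist ρ) (hmeas : Measurable (uncurry ρ))
    (hν : ∀ᵐ k ∂ν, ∀ x, ρ x (x * k) ≤ M) (x y : G) :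
    |averagedDist ν ρ x y - ρ x y| ≤ 2 * M := by
  rw [averagedDist, ← integral_prod _ (integrable_dist_mul_prod hρ hmeas hν x y), two_mul]
  exact abs_integral_sub_le_of_ae (integrable_dist_mul_prod hρ hmeas hν x y).aestronglyMeasurable
    (ae_abs_dist_mul_sub_le hρ hν x y)

theorem averagedDist_comm (hρ : IsPseudoDist ρ) (hmeas : Measurable (uncurry ρ))
    (hν : ∀ᵐ k ∂ν, ∀ x, ρ x (x * k) ≤ M) (x y : G) :
    averagedDist ν ρ x y = averagedDist ν ρ y x := by
  rw [averagedDist, averagedDist, integral_integral_swap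
    (f := fun k₁ k₂ => ρ (y * k₁) (x * k₂)) (integrable_dist_mul_prod hρ hmeas hν y x)]
  simp only [hρ.symm (x * _)]

theorem averagedDist_triangle (hρ : IsPseudoDist ρ) (hmeas : Measurable (uncurry ρ))
    (hν : ∀ᵐ k ∂ν, ∀ x, ρ x (x * k) ≤ M) (x y z : G) :
    averagedDist ν ρ x z ≤ averagedDist ν ρ x y + averagedDist ν ρ y z := by
  set A : G → ℝ := fun k₁ => ∫ k₂, ρ (x * k₁) (y * k₂) ∂ν
  set B : G → ℝ := fun k₃ => ∫ k₂, ρ (y * k₂) (z * k₃) ∂ν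
  have hA : Integrable A ν := (integrable_dist_mul_prod hρ hmeas hν x y).integral_prod_left
  have hB : Integrable B ν := (integrable_dist_mul_prod hρ hmeas hν y z).integral_prod_right
  have hvia : ∀ a b, ρ a b ≤ ∫ k, ρ a (y * k) ∂ν + ∫ k, ρ (y * k) b ∂ν := fun a b => by
    simp only [hρ.symm (y * _) b]
    rw [← integral_add (integrable_dist_mul hρ hmeas hν a y) (integrable_dist_mul hρ hmeas hν b y)]
    simpa using integral_mono (integrable_const (ρ a b))
      ((integrable_dist_mul hρ hmeas hν a y).add (integrable_dist_mul hρ hmeas hν b y))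
      fun k => (hρ.triangle a (y * k) b).trans_eq (by rw [hρ.symm (y * k) b]; rfl)
  calc averagedDist ν ρ x z ≤ ∫ k₁, (A k₁ + ∫ k₃, B k₃ ∂ν) ∂ν := by
        refine integral_mono (integrable_dist_mul_prod hρ hmeas hν x z).integral_prod_left
          (hA.add (integrable_const _)) fun k₁ => ?_
        calc ∫ k₃, ρ (x * k₁) (z * k₃) ∂ν ≤ ∫ k₃, (A k₁ + B k₃) ∂ν :=
              integral_mono (integrable_dist_mul hρ hmeas hν _ z) ((integrable_const _).add hB)
                fun k₃ => hvia _ _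
          _ = A k₁ + ∫ k₃, B k₃ ∂ν := by rw [integral_add (integrable_const _) hB]; simp
    _ = averagedDist ν ρ x y + ∫ k₃, B k₃ ∂ν := by
        rw [integral_add hA (integrable_const _)]; simp [averagedDist, A]
    _ = averagedDist ν ρ x y + averagedDist ν ρ y z := by
        congr 1
        exact (integral_integral_swap (f := fun k₁ k₂ => ρ (y * k₁) (z * k₂))
          (integrable_dist_mul_prod hρ hmeas hν y z)).symm

theorem isPseudoDist_averagedDist (hρ : IsPseudoDist ρ) (hmeas : Measurable (uncurry ρ))
    (hν : ∀ᵐ k ∂ν, ∀ x, ρ x (x * k) ≤ M) : IsPseudoDist (averagedDist ν ρ) :=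
  ⟨fun _ _ => integral_nonneg fun _ => integral_nonneg fun _ => hρ.nonneg _ _,
    averagedDist_comm hρ hmeas hν, averagedDist_triangle hρ hmeas hν⟩

end AveragedDist

theorem averaged_pseudodistance_periodic_and_asymptotic_general
    {G : Type*} [Group G] [TopologicalSpace G] [IsTopologicalGroup G]
    [MeasurableSpace G] [BorelSpace G]
    (ρ : G → G → ℝ) (hρ : IsPeriodicPseudoDist ρ)
    (hmeas : Measurable (Function.uncurry ρ))
    (K : Subgroup G) (hK : IsCompact (K : Set G))
    (ν : Measure G) [IsProbabilityMeasure ν]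
    (hsupp : ν ((K : Set G)ᶜ) = 0) :
    IsPeriodicPseudoDist (fun x y : G => ∫ k₁, ∫ k₂, ρ (x * k₁) (y * k₂) ∂ν ∂ν) ∧
    (∃ C : ℝ, ∀ x y : G,
      |(∫ k₁, ∫ k₂, ρ (x * k₁) (y * k₂) ∂ν ∂ν) - ρ x y| ≤ C) ∧
    (∀ ε : ℝ, 0 < ε → ∃ L : Set G, IsCompact L ∧ ∀ x ∉ L,
      |(∫ k₁, ∫ k₂, ρ (1 * k₁) (x * k₂) ∂ν ∂ν) / ρ 1 x - 1| ≤ ε) := by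
  obtain ⟨M, hM⟩ := hρ.exists_bound_mul hK
  have hν : ∀ᵐ k ∂ν, ∀ x, ρ x (x * k) ≤ M := by
    filter_upwards [measure_eq_zero_iff_ae_notMem.1 hsupp] with k hk x
    exact hM x k (not_not.1 hk)
  have hpd := isPseudoDist_averagedDist hρ.1 hmeas hν
  have hdist := abs_averagedDist_sub_le hρ.1 hmeas hν
  exact ⟨hρ.of_abs_sub_le hpd hdist fun _ hg => averagedDist_mul_left hg, ⟨2 * M, hdist⟩,
    fun _ hε => hρ.2.2.1.exists_isCompact_abs_div_sub_one_le hdist hε⟩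

/-- **Averaging a periodic pseudodistance over a compact subgroup** (Section 4.5). Let `ρ` be a
Borel measurable periodic pseudodistance on a locally compact group `G`, let `K` be a compact
subgroup of `G` and let `ν` be the normalized Haar probability measure of `K` (viewed as a
measure on `G` supported on `K` and invariant under left translations by elements of `K`).
Then the average `ρ^K(x,y) = ∫∫ ρ(xk₁, yk₂) dν(k₁) dν(k₂)` is again a periodic pseudodistance,
it lies at a bounded distance from `ρ`, and `ρ^K(e,x)/ρ(e,x) → 1` as `x → ∞` in `G`. -/
theorem averaged_pseudodistance_periodic_and_asymptotic
    {G : Type*} [Group G] [TopologicalSpace G] [IsTopologicalGroup G] [LocallyCompactSpace G]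
    [MeasurableSpace G] [BorelSpace G]
    (ρ : G → G → ℝ) (hρ : IsPeriodicPseudoDist ρ)
    (hmeas : Measurable (Function.uncurry ρ))
    (K : Subgroup G) (hK : IsCompact (K : Set G))
    (ν : Measure G) [IsProbabilityMeasure ν]
    (hsupp : ν ((K : Set G)ᶜ) = 0)
    (hinv : ∀ k ∈ K, Measure.map (fun x : G => k * x) ν = ν) :
    IsPeriodicPseudoDist (fun x y : G => ∫ k₁, ∫ k₂, ρ (x * k₁) (y * k₂) ∂ν ∂ν) ∧
    (∃ C : ℝ, ∀ x y : G,
      |(∫ k₁, ∫ k₂, ρ (x * k₁) (y * k₂) ∂ν ∂ν) - ρ x y| ≤ C) ∧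
    (∀ ε : ℝ, 0 < ε → ∃ L : Set G, IsCompact L ∧ ∀ x ∉ L,
      |(∫ k₁, ∫ k₂, ρ (1 * k₁) (x * k₂) ∂ν ∂ν) / ρ 1 x - 1| ≤ ε) :=
  averaged_pseudodistance_periodic_and_asymptotic_general ρ hρ hmeas K hK ν hsupp
end

section
/- Let G be a locally compact group with left Haar measure vol_G and H a closed subgroup of G with left Haar measure vol_H. Let Ω_H be a compact subset of H and let K be a compact neighborhood of the identity in G. Then for every n ≥ 1: vol_G(K) · vol_H(Ω_H^n) ≤ vol_H(KK⁻¹ ∩ H) · vol_G(Ω_H^n · K), where Ω_H^n is the n-fold product set of Ω_H, KK⁻¹ = {k₁k₂⁻¹ : k₁,k₂ ∈ K}, and Ω_H^n · K = {ωk : ω ∈ Ω_H^n, k ∈ K}. -/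
/-!
Integrate `(h, g) ↦ 1_Ω(h) · 1_K(h⁻¹g)` over `H × G` against `ν ⊗ μ`. Integrating in `g` first
gives `μ(K) ν(Ω)` by left invariance of `μ`. For fixed `g`, any two `h, h'` with `h⁻¹g, h'⁻¹g ∈ K`
satisfy `h⁻¹h' ∈ KK⁻¹ ∩ H`, so these `h` lie in one left translate of `KK⁻¹ ∩ H`, and they exist in
`Ω` only if `g ∈ ΩK`; integrating in `h` first thus gives at most `ν(KK⁻¹ ∩ H) μ(ΩK)`.

Haar measures need not be σ-finite and compact sets need not be measurable for the product
σ-algebra, so the indicators are replaced by Urysohn functions for `K ⊆ U` and `ΩK ⊆ O` with `U`,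
`O` open, for which Fubini holds by compactness of the support. Outer regularity of the canonical
Haar measures, to which any Haar measure is proportional on compact sets, then lets `UU⁻¹ ∩ H` and
`O` shrink to `KK⁻¹ ∩ H` and `ΩK`.
-/

open MeasureTheory Pointwise Set
open scoped ENNReal

theorem MeasureTheory.lintegral_lintegral_swap_of_hasCompactSupport {X Y : Type*}
    [TopologicalSpace X] [TopologicalSpace Y] [MeasurableSpace X] [MeasurableSpace Y]
    [OpensMeasurableSpace X] [OpensMeasurableSpace Y] {f : X → Y → ℝ≥0∞}
    (hf : Continuous f.uncurry) (h'f : HasCompactSupport f.uncurry)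
    (μ : Measure X) (ν : Measure Y) [IsFiniteMeasureOnCompacts μ] [IsFiniteMeasureOnCompacts ν] :
    ∫⁻ x, ∫⁻ y, f x y ∂ν ∂μ = ∫⁻ y, ∫⁻ x, f x y ∂μ ∂ν := by
  set U := Prod.fst '' tsupport f.uncurry
  set V := Prod.snd '' tsupport f.uncurry
  have : Fact (μ U < ∞) := ⟨(h'f.image continuous_fst).measure_lt_top⟩
  have : Fact (ν V < ∞) := ⟨(h'f.image continuous_snd).measure_lt_top⟩
  have hU : ∀ x ∉ U, ∀ y, f x y = 0 := fun x hx y ↦ by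
    by_contra h
    exact hx ⟨(x, y), subset_tsupport _ h, rfl⟩
  have hV : ∀ y ∉ V, ∀ x, f x y = 0 := fun y hy x ↦ by
    by_contra h
    exact hy ⟨(x, y), subset_tsupport _ h, rfl⟩
  have hUV : ∀ x, ∫⁻ y in V, f x y ∂ν = ∫⁻ y, f x y ∂ν := fun x ↦
    setLIntegral_eq_of_support_subset fun y hy ↦ by_contra fun h ↦ hy (hV y h x)
  have hVU : ∀ y, ∫⁻ x in U, f x y ∂μ = ∫⁻ x, f x y ∂μ := fun y ↦
    setLIntegral_eq_of_support_subset fun x hx ↦ by_contra fun h ↦ hx (hU x h y)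
  calc ∫⁻ x, ∫⁻ y, f x y ∂ν ∂μ = ∫⁻ x in U, ∫⁻ y in V, f x y ∂ν ∂μ := by
        simp_rw [hUV]
        exact (setLIntegral_eq_of_support_subset fun x hx ↦
          by_contra fun h ↦ hx (by simp [hU x h])).symm
    _ = ∫⁻ y in V, ∫⁻ x in U, f x y ∂μ ∂ν :=
        lintegral_lintegral_swap (h'f.stronglyMeasurable_of_prod hf).measurable.aemeasurable
    _ = ∫⁻ y, ∫⁻ x, f x y ∂μ ∂ν := by
        simp_rw [hVU]
        exact setLIntegral_eq_of_support_subset fun y hy ↦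
          by_contra fun h ↦ hy (by simp [hV y h])

theorem MeasureTheory.measure_setOf_inv_mul_mem_le {G : Type*} [Group G] [MeasurableSpace G]
    {H : Subgroup G} (ν : Measure H) [ν.IsMulLeftInvariant] (U : Set G) (g : G) :
    ν {h : H | (h : G)⁻¹ * g ∈ U} ≤ ν (((↑) : H → G) ⁻¹' (U * U⁻¹)) := by
  rcases eq_empty_or_nonempty {h : H | (h : G)⁻¹ * g ∈ U} with hempty | ⟨h₀, hh₀⟩
  · simp [hempty]
  · calc ν {h : H | (h : G)⁻¹ * g ∈ U} ≤ ν (h₀ • ((↑) : H → G) ⁻¹' (U * U⁻¹)) := by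
          refine measure_mono fun h hh ↦ ⟨h₀⁻¹ * h, ?_, mul_inv_cancel_left h₀ h⟩
          have : ((h₀ : G)⁻¹ * g) * ((h : G)⁻¹ * g)⁻¹ = ((h₀⁻¹ * h : H) : G) := by
            simp [mul_assoc]
          exact mem_preimage.2 (this ▸ mul_mem_mul hh₀ (inv_mem_inv.2 hh))
      _ = ν (((↑) : H → G) ⁻¹' (U * U⁻¹)) := measure_smul ν h₀ _

section TopologicalGroup

variable {G : Type*} [Group G] [TopologicalSpace G] [IsTopologicalGroup G]

theorem IsCompact.exists_isOpen_superset_mul_inv_subset {K W : Set G} (hK : IsCompact K)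
    (hW : IsOpen W) (hKW : K * K⁻¹ ⊆ W) : ∃ U, IsOpen U ∧ K ⊆ U ∧ U * U⁻¹ ⊆ W := by
  obtain ⟨u, v, hu, hv, hKu, hKv, huv⟩ :=
    generalized_tube_lemma hK hK
      (hW.preimage (by fun_prop : Continuous fun p : G × G ↦ p.1 * p.2⁻¹))
      fun p hp ↦ hKW (mul_mem_mul hp.1 (inv_mem_inv.2 hp.2))
  refine ⟨u ∩ v, hu.inter hv, subset_inter hKu hKv, ?_⟩
  rintro _ ⟨a, ha, b, hb, rfl⟩
  simpa using huv (mk_mem_prod ha.1 (mem_inv.1 hb).2 : (a, b⁻¹) ∈ u ×ˢ v)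

theorem IsCompact.exists_isOpen_superset_preimage_mul_inv_subset {H : Subgroup G}
    (hH : IsClosed (H : Set G)) {K : Set G} (hK : IsCompact K) {V : Set H} (hV : IsOpen V)
    (hKV : ((↑) : H → G) ⁻¹' (K * K⁻¹) ⊆ V) :
    ∃ U, IsOpen U ∧ K ⊆ U ∧ ((↑) : H → G) ⁻¹' (U * U⁻¹) ⊆ V := by
  obtain ⟨W, hW, rfl⟩ := isOpen_induced_iff.1 hV
  have hKW : K * K⁻¹ ⊆ W ∪ (H : Set G)ᶜ := fun x hx ↦
    (em (x ∈ H)).imp (fun hxH ↦ hKV (show ((⟨x, hxH⟩ : H) : G) ∈ K * K⁻¹ from hx)) id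
  obtain ⟨U, hU, hKU, hUW⟩ := hK.exists_isOpen_superset_mul_inv_subset
    (hW.union hH.isOpen_compl) hKW
  exact ⟨U, hU, hKU, fun h hh ↦ (hUW hh).resolve_right (not_not.2 h.2)⟩

theorem IsCompact.pow {M : Type*} [Monoid M] [TopologicalSpace M] [ContinuousMul M] {s : Set M}
    (hs : IsCompact s) (n : ℕ) : IsCompact (s ^ n) := by
  induction n with
  | zero => simp
  | succ n ih => simpa only [pow_succ] using ih.mul hs

theorem HasCompactSupport.mul_comp_inv_mul {α : Type*} [MulZeroClass α] {H : Subgroup G}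
    (hH : IsClosed (H : Set G)) {ψ f : G → α} (hψ : HasCompactSupport ψ)
    (hf : HasCompactSupport f) :
    HasCompactSupport fun p : H × G ↦ ψ p.2 * f ((p.1 : G)⁻¹ * p.2) := by
  have hC : IsClosed {p : H × G | p.2 ∈ tsupport ψ ∧ (p.1 : G)⁻¹ * p.2 ∈ tsupport f} :=
    ((isClosed_tsupport ψ).preimage continuous_snd).inter
      ((isClosed_tsupport f).preimage (by fun_prop))
  refine IsCompact.of_isClosed_subset
    ((hH.isClosedEmbedding_subtypeVal.isCompact_preimage (hψ.mul hf.inv)).prod hψ)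
    isClosed_closure ((closure_minimal (fun p hp ↦ ?_) hC).trans ?_)
  · exact ⟨subset_tsupport _ (left_ne_zero_of_mul hp), subset_tsupport _ (right_ne_zero_of_mul hp)⟩
  · rintro ⟨h, g⟩ ⟨hg, hhg⟩
    exact ⟨by simpa using mul_mem_mul hg (inv_mem_inv.2 hhg), hg⟩

end TopologicalGroup

section Comparison

variable {G : Type*} [Group G] [TopologicalSpace G] [IsTopologicalGroup G] [LocallyCompactSpace G]
  [MeasurableSpace G] [BorelSpace G] (μ : Measure G) [μ.IsMulLeftInvariant]
  [IsFiniteMeasureOnCompacts μ] {H : Subgroup G} (ν : Measure H) [ν.IsMulLeftInvariant]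
  [IsFiniteMeasureOnCompacts ν] {A : Set H} {K : Set G}

theorem MeasureTheory.measure_mul_measure_le_of_isOpen (hH : IsClosed (H : Set G))
    (hA : IsCompact A) (hK : IsCompact K) {U O : Set G} (hU : IsOpen U) (hKU : K ⊆ U)
    (hO : IsOpen O) (hAKO : ((↑) '' A) * K ⊆ O) :
    μ K * ν A ≤ ν (((↑) : H → G) ⁻¹' (U * U⁻¹)) * μ O := by
  obtain ⟨f, hfK, hfU, hf, hf01⟩ := exists_continuous_one_zero_of_isCompact hK hU.isClosed_compl
    (disjoint_compl_right_iff_subset.2 hKU)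
  obtain ⟨ψ, hψS, hψO, hψ, hψ01⟩ := exists_continuous_one_zero_of_isCompact
    ((hA.image continuous_subtype_val).mul hK) hO.isClosed_compl
    (disjoint_compl_right_iff_subset.2 hAKO)
  set F : H → G → ℝ≥0∞ := fun h g ↦ ENNReal.ofReal (ψ g * f ((h : G)⁻¹ * g))
  have hF : Continuous F.uncurry := ENNReal.continuous_ofReal.comp
    (by fun_prop : Continuous fun p : H × G ↦ ψ p.2 * f ((p.1 : G)⁻¹ * p.2))
  have hFsupp : HasCompactSupport F.uncurry :=
    (hψ.mul_comp_inv_mul hH hf).comp_left ENNReal.ofReal_zero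
  -- `A` need not be measurable (`H` need not be Hausdorff), but `closure A` is.
  have lower : ∀ h ∈ closure A, μ K ≤ ∫⁻ g, F h g ∂μ := by
    intro h hh
    have hψ1 : ∀ k ∈ K, ψ (h * k) = 1 := fun k hk ↦
      EqOn.closure (f := fun h : H ↦ ψ (h * k)) (g := 1)
        (fun h' hh' ↦ hψS (mul_mem_mul (mem_image_of_mem _ hh') hk)) (by fun_prop)
        continuous_const hh
    rw [← measure_smul μ (h : G) K]
    refine meas_le_lintegral₀ (by fun_prop) ?_
    rintro _ ⟨k, hk, rfl⟩
    simp [F, hψ1 k hk, hfK hk]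
  have upper : ∀ g, ∫⁻ h, F h g ∂ν ≤ O.indicator (fun _ ↦ ν (((↑) : H → G) ⁻¹' (U * U⁻¹))) g := by
    intro g
    by_cases hg : g ∈ O
    · rw [indicator_of_mem hg]
      refine (lintegral_le_meas (s := {h : H | (h : G)⁻¹ * g ∈ U}) (fun h ↦ ?_)
        (fun h hh ↦ ?_)).trans (measure_setOf_inv_mul_mem_le ν U g)
      · exact ENNReal.ofReal_le_one.2 (mul_le_one₀ (hψ01 g).2 (hf01 _).1 (hf01 _).2)
      · simp [F, hfU hh]
    · simp [F, hψO hg]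
  calc μ K * ν A = ∫⁻ _ in closure A, μ K ∂ν := by rw [setLIntegral_const, hA.measure_closure]
    _ ≤ ∫⁻ h in closure A, ∫⁻ g, F h g ∂μ ∂ν :=
        setLIntegral_mono' isClosed_closure.measurableSet lower
    _ ≤ ∫⁻ h, ∫⁻ g, F h g ∂μ ∂ν := setLIntegral_le_lintegral _ _
    _ = ∫⁻ g, ∫⁻ h, F h g ∂ν ∂μ := lintegral_lintegral_swap_of_hasCompactSupport hF hFsupp ν μ
    _ ≤ ∫⁻ g, O.indicator (fun _ ↦ ν (((↑) : H → G) ⁻¹' (U * U⁻¹))) g ∂μ := lintegral_mono upper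
    _ = ν (((↑) : H → G) ⁻¹' (U * U⁻¹)) * μ O := lintegral_indicator_const hO.measurableSet _

theorem MeasureTheory.measure_mul_measure_le_of_outerRegular [μ.OuterRegular] [ν.OuterRegular]
    (hH : IsClosed (H : Set G)) (hA : IsCompact A) (hK : IsCompact K) :
    μ K * ν A ≤ ν (((↑) : H → G) ⁻¹' (K * K⁻¹)) * μ (((↑) '' A) * K) := by
  have hT := (hH.isClosedEmbedding_subtypeVal.isCompact_preimage (hK.mul hK.inv)).measure_lt_top
    (μ := ν)
  have hS := ((hA.image continuous_subtype_val).mul hK).measure_lt_top (μ := μ)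
  refine ENNReal.le_mul_of_forall_lt (.inr hS.ne) (.inl hT.ne) fun r hr s hs ↦ ?_
  obtain ⟨V, hTV, hV, hVr⟩ := Set.exists_isOpen_lt_of_lt _ r hr
  obtain ⟨O, hSO, hO, hOs⟩ := Set.exists_isOpen_lt_of_lt _ s hs
  obtain ⟨U, hU, hKU, hUV⟩ := hK.exists_isOpen_superset_preimage_mul_inv_subset hH hV hTV
  calc μ K * ν A ≤ ν (((↑) : H → G) ⁻¹' (U * U⁻¹)) * μ O :=
        measure_mul_measure_le_of_isOpen μ ν hH hA hK hU hKU hO hSO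
    _ ≤ r * s := mul_le_mul' ((measure_mono hUV).trans hVr.le) hOs.le

end Comparison

theorem haar_volume_comparison_general
    {G : Type*} [Group G] [TopologicalSpace G] [IsTopologicalGroup G] [LocallyCompactSpace G]
    [MeasurableSpace G] [BorelSpace G]
    (μ : Measure G) [μ.IsHaarMeasure]
    (H : Subgroup G) (hclosed : IsClosed (H : Set G))
    (ν : Measure H) [ν.IsHaarMeasure]
    (ΩH : Set H) (hΩH : IsCompact ΩH)
    (K : Set G) (hK : IsCompact K)
    (n : ℕ) :
    μ K * ν (ΩH ^ n) ≤
      ν ((Subtype.val : H → G) ⁻¹' (K * K⁻¹)) *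
        μ (((Subtype.val : H → G) '' (ΩH ^ n)) * K) := by
  have : LocallyCompactSpace H := hclosed.isClosedEmbedding_subtypeVal.locallyCompactSpace
  have hA := hΩH.pow n
  have hT : IsCompact ((Subtype.val : H → G) ⁻¹' (K * K⁻¹)) :=
    hclosed.isClosedEmbedding_subtypeVal.isCompact_preimage (hK.mul hK.inv)
  have hS := (hA.image continuous_subtype_val).mul hK
  have hμ {s : Set G} (hs : IsCompact s) : μ s = μ.haarScalarFactor Measure.haar * Measure.haar s :=
    by simpa using Measure.measure_isMulInvariant_eq_smul_of_isCompact_closure μ _ hs.closure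
  have hν {s : Set H} (hs : IsCompact s) : ν s = ν.haarScalarFactor Measure.haar * Measure.haar s :=
    by simpa using Measure.measure_isMulInvariant_eq_smul_of_isCompact_closure ν _ hs.closure
  set c : ℝ≥0∞ := μ.haarScalarFactor Measure.haar * ν.haarScalarFactor Measure.haar
  calc μ K * ν (ΩH ^ n) = c * (Measure.haar K * Measure.haar (ΩH ^ n)) := by
        rw [hμ hK, hν hA]; ring
    _ ≤ c * (Measure.haar ((Subtype.val : H → G) ⁻¹' (K * K⁻¹)) *
          Measure.haar (((Subtype.val : H → G) '' (ΩH ^ n)) * K)) :=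
        mul_le_mul_right (measure_mul_measure_le_of_outerRegular _ _ hclosed hA hK) c
    _ = ν ((Subtype.val : H → G) ⁻¹' (K * K⁻¹)) * μ (((Subtype.val : H → G) '' (ΩH ^ n)) * K) := by
        rw [hν hT, hμ hS]; ring

/-- **Guivarc'h's volume comparison inequality** (from the proof of Lemma 7.9). Let `G` be a
locally compact group with left Haar measure `μ`, `H` a closed subgroup with left Haar
measure `ν`, `Ω_H` a compact subset of `H` and `K` a compact neighborhood of the identity in
`G`. Then `μ(K) · ν(Ω_H^n) ≤ ν(KK⁻¹ ∩ H) · μ(Ω_H^n · K)` for every `n ≥ 1`. -/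
theorem haar_volume_comparison
    {G : Type*} [Group G] [TopologicalSpace G] [IsTopologicalGroup G] [LocallyCompactSpace G]
    [MeasurableSpace G] [BorelSpace G]
    (μ : Measure G) [μ.IsHaarMeasure]
    (H : Subgroup G) (hclosed : IsClosed (H : Set G))
    (ν : Measure H) [ν.IsHaarMeasure]
    (ΩH : Set H) (hΩH : IsCompact ΩH)
    (K : Set G) (hK : IsCompact K) (hKnhd : K ∈ nhds (1 : G))
    (n : ℕ) (hn : 1 ≤ n) :
    μ K * ν (ΩH ^ n) ≤
      ν ((Subtype.val : H → G) ⁻¹' (K * K⁻¹)) *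
        μ (((Subtype.val : H → G) '' (ΩH ^ n)) * K) :=
  haar_volume_comparison_general μ H hclosed ν ΩH hΩH K hK n
end

section
/- Let H be a group, V a finite-dimensional real vector space, and π₁ : H → V a group homomorphism into the additive group of V. Let ℓ : H → [0,∞) satisfy ℓ(h⁻¹) = ℓ(h) and ℓ(gh) ≤ ℓ(g) + ℓ(h) for all g,h ∈ H, and π₁(h) = 0 whenever ℓ(h) = 0. Suppose ‖·‖₀ is a norm on V whose closed unit ball equals the closed convex hull of the set {π₁(h)/ℓ(h) : h ∈ H, ℓ(h) > 0}. Then for every ε > 0 there exists s₀ > 0 such that for every s > s₀ and every v ∈ V with ‖v‖₀ = 1, there exists h ∈ H with (1−ε)s ≤ ℓ(h) ≤ (1+ε)s and ‖π₁(h)/ℓ(h) − v‖₀ ≤ ε. -/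
/-!
Call `p ∈ V` a tracked direction if for some constant `C` every point `s • p` of the ray
(`s ≥ 0`) lies within `C` of some `π₁ h` with `ℓ h ≤ s + C`. Each `π₁ g / ℓ g` is tracked, by
the powers `g ^ ⌈s / ℓ g⌉`, and tracked directions form a convex set, since products of
trackers track convex combinations. So the unit ball is the closure of tracked directions, and
compactness of the unit sphere makes the tracking constant uniform up to an error `δ s`. The
hypothesis on the ball also gives `‖π₁ h‖ ≤ ℓ h`, which turns `π₁ h ≈ s • v` into `ℓ h ≈ s`.
-/

open Metric

section Tracking

variable {H V : Type*} [Group H] [NormedAddCommGroup V] [NormedSpace ℝ V] {π₁ : H → V}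
  {ℓ : H → ℝ}

omit [NormedSpace ℝ V] in
theorem map_pow_eq_nsmul_of_map_mul (hhom : ∀ g h : H, π₁ (g * h) = π₁ g + π₁ h) (g : H)
    (n : ℕ) : π₁ (g ^ n) = n • π₁ g := by
  induction n with
  | zero => simpa using hhom 1 1
  | succ n ih => rw [pow_succ, hhom, ih, succ_nsmul]

theorem length_one_nonneg (hsub : ∀ g h : H, ℓ (g * h) ≤ ℓ g + ℓ h) : 0 ≤ ℓ 1 := by
  simpa using hsub 1 1

theorem length_pow_le (hsub : ∀ g h : H, ℓ (g * h) ≤ ℓ g + ℓ h) (g : H) (n : ℕ) :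
    ℓ (g ^ n) ≤ ℓ 1 + n * ℓ g := by
  induction n with
  | zero => simp
  | succ n ih =>
    calc ℓ (g ^ (n + 1)) ≤ ℓ (g ^ n) + ℓ g := pow_succ g n ▸ hsub _ _
      _ ≤ ℓ 1 + (n + 1 : ℕ) * ℓ g := by push_cast; linarith

omit [Group H] in
variable (π₁ ℓ) in
def trackedDirections : Set V :=
  {p | ∃ C : ℝ, ∀ s : ℝ, 0 ≤ s → ∃ h : H, ‖π₁ h - s • p‖ ≤ C ∧ ℓ h ≤ s + C}

theorem convex_trackedDirections (hhom : ∀ g h : H, π₁ (g * h) = π₁ g + π₁ h)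
    (hsub : ∀ g h : H, ℓ (g * h) ≤ ℓ g + ℓ h) : Convex ℝ (trackedDirections π₁ ℓ) := by
  rintro p ⟨C, hC⟩ q ⟨D, hD⟩ a b ha hb hab
  refine ⟨C + D, fun s hs => ?_⟩
  obtain ⟨g, hπg, hℓg⟩ := hC (a * s) (by positivity)
  obtain ⟨h, hπh, hℓh⟩ := hD (b * s) (by positivity)
  have hsplit : π₁ (g * h) - s • (a • p + b • q) =
      (π₁ g - (a * s) • p) + (π₁ h - (b * s) • q) := by
    rw [hhom, smul_add, smul_smul, smul_smul, mul_comm s a, mul_comm s b]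
    abel
  refine ⟨g * h, ?_, ?_⟩
  · rw [hsplit]
    exact (norm_add_le _ _).trans (add_le_add hπg hπh)
  · calc ℓ (g * h) ≤ ℓ g + ℓ h := hsub g h
      _ ≤ (a + b) * s + (C + D) := by linarith
      _ = s + (C + D) := by rw [hab, one_mul]

theorem inv_smul_mem_trackedDirections (hhom : ∀ g h : H, π₁ (g * h) = π₁ g + π₁ h)
    (hsub : ∀ g h : H, ℓ (g * h) ≤ ℓ g + ℓ h) (hnorm : ∀ h, ‖π₁ h‖ ≤ ℓ h) {g : H}
    (hg : 0 < ℓ g) : (ℓ g)⁻¹ • π₁ g ∈ trackedDirections π₁ ℓ := by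
  refine ⟨ℓ 1 + ℓ g, fun s hs => ⟨g ^ ⌈s / ℓ g⌉₊, ?_, ?_⟩⟩
  · have hceil : |(⌈s / ℓ g⌉₊ : ℝ) - s / ℓ g| ≤ 1 := by
      have := Nat.le_ceil (s / ℓ g)
      have := Nat.ceil_lt_add_one (div_nonneg hs hg.le)
      rw [abs_le]; constructor <;> linarith
    calc ‖π₁ (g ^ ⌈s / ℓ g⌉₊) - s • (ℓ g)⁻¹ • π₁ g‖
        = |(⌈s / ℓ g⌉₊ : ℝ) - s / ℓ g| * ‖π₁ g‖ := by
          rw [map_pow_eq_nsmul_of_map_mul hhom, ← Nat.cast_smul_eq_nsmul ℝ, smul_smul,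
            ← div_eq_mul_inv, ← sub_smul, norm_smul, Real.norm_eq_abs]
      _ ≤ 1 * ℓ g := mul_le_mul hceil (hnorm g) (norm_nonneg _) zero_le_one
      _ ≤ ℓ 1 + ℓ g := by linarith [length_one_nonneg hsub]
  · calc ℓ (g ^ ⌈s / ℓ g⌉₊) ≤ ℓ 1 + ⌈s / ℓ g⌉₊ * ℓ g := length_pow_le hsub g _
      _ ≤ ℓ 1 + (s / ℓ g + 1) * ℓ g := by
          gcongr; exact (Nat.ceil_lt_add_one (div_nonneg hs hg.le)).le
      _ = s + (ℓ 1 + ℓ g) := by field_simp; ring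

omit [Group H] in
theorem exists_uniform_tracking {K : Set V} (hK : IsCompact K)
    (hKA : K ⊆ closure (trackedDirections π₁ ℓ)) {δ : ℝ} (hδ : 0 < δ) :
    ∃ C : ℝ, ∀ u ∈ K, ∀ s : ℝ, 0 ≤ s →
      ∃ h : H, ‖π₁ h - s • u‖ ≤ C + s * δ ∧ ℓ h ≤ s + C := by
  refine hK.induction_on ⟨0, by simp⟩ (fun _ _ hst ⟨C, hC⟩ => ⟨C, fun u hu => hC u (hst hu)⟩)
    ?_ fun v hv => ?_
  · rintro S T ⟨C, hC⟩ ⟨D, hD⟩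
    refine ⟨max C D, fun u hu s hs => ?_⟩
    rcases hu with hu | hu
    · obtain ⟨h, hπ, hℓ⟩ := hC u hu s hs
      exact ⟨h, by linarith [le_max_left C D], by linarith [le_max_left C D]⟩
    · obtain ⟨h, hπ, hℓ⟩ := hD u hu s hs
      exact ⟨h, by linarith [le_max_right C D], by linarith [le_max_right C D]⟩
  · obtain ⟨p, ⟨C, hC⟩, hvp⟩ := mem_closure_iff.mp (hKA hv) (δ / 2) (half_pos hδ)
    refine ⟨ball v (δ / 2), mem_nhdsWithin_of_mem_nhds (ball_mem_nhds v (half_pos hδ)), C,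
      fun u hu s hs => ?_⟩
    obtain ⟨h, hπ, hℓ⟩ := hC s hs
    have hpu : ‖p - u‖ ≤ δ := by
      rw [← dist_eq_norm]
      linarith [dist_triangle p v u, dist_comm v p, mem_ball.mp hu, dist_comm u v]
    refine ⟨h, ?_, hℓ⟩
    calc ‖π₁ h - s • u‖ = ‖(π₁ h - s • p) + s • (p - u)‖ := by rw [smul_sub]; abel_nf
      _ ≤ ‖π₁ h - s • p‖ + s * ‖p - u‖ := by
          exact (norm_add_le _ _).trans_eq (by rw [norm_smul, Real.norm_of_nonneg hs])
      _ ≤ C + s * δ := by gcongr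

end Tracking

theorem norm_le_of_unitBall_eq_closure_convexHull {H V : Type*} [Group H]
    [NormedAddCommGroup V] [NormedSpace ℝ V] {π₁ : H → V} {ℓ : H → ℝ}
    (hnonneg : ∀ h, 0 ≤ ℓ h) (hker : ∀ h : H, ℓ h = 0 → π₁ h = 0)
    (hball : {v : V | ‖v‖ ≤ 1} =
      closure (convexHull ℝ {w : V | ∃ h : H, 0 < ℓ h ∧ w = (ℓ h)⁻¹ • π₁ h})) (h : H) :
    ‖π₁ h‖ ≤ ℓ h := by
  rcases (hnonneg h).eq_or_lt with h0 | hpos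
  · simp [hker h h0.symm, ← h0]
  · have hmem : (ℓ h)⁻¹ • π₁ h ∈ {v : V | ‖v‖ ≤ 1} :=
      hball ▸ subset_closure (subset_convexHull ℝ _ ⟨h, hpos, rfl⟩)
    rwa [Set.mem_ofPred_eq, norm_smul_of_nonneg (inv_nonneg.mpr hpos.le),
      inv_mul_le_iff₀ hpos, mul_one] at hmem

theorem approximation_of_near_ray {V : Type*} [NormedAddCommGroup V] [NormedSpace ℝ V]
    {x v : V} {r s ε η : ℝ} (hv : ‖v‖ = 1) (hs : 0 < s) (hηε : 4 * η ≤ ε * s)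
    (hηs : 4 * η ≤ s) (hx : ‖x - s • v‖ ≤ η) (hxr : ‖x‖ ≤ r) (hr : r ≤ s + η) :
    (1 - ε) * s ≤ r ∧ r ≤ (1 + ε) * s ∧ ‖r⁻¹ • x - v‖ ≤ ε := by
  have hsv : ‖s • v‖ = s := by rw [norm_smul, hv, Real.norm_of_nonneg hs.le, mul_one]
  have hlow : s - η ≤ r := by linarith [norm_sub_norm_le (s • v) x, norm_sub_rev (s • v) x]
  have hr0 : 0 < r := by linarith [norm_nonneg (x - s • v)]
  have hrs : |s - r| ≤ η := abs_le.mpr ⟨by linarith, by linarith⟩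
  have hxv : ‖x - r • v‖ ≤ 2 * η := by
    calc ‖x - r • v‖ = ‖(x - s • v) + (s - r) • v‖ := by rw [sub_smul]; abel_nf
      _ ≤ η + |s - r| := by grw [norm_add_le, hx, norm_smul, hv, mul_one, Real.norm_eq_abs]
      _ ≤ 2 * η := by linarith
  refine ⟨by linarith, by linarith, ?_⟩
  calc ‖r⁻¹ • x - v‖ = r⁻¹ * ‖x - r • v‖ := by
        rw [← norm_smul_of_nonneg (inv_nonneg.mpr hr0.le), smul_sub, smul_smul,
          inv_mul_cancel₀ hr0.ne', one_smul]
    _ ≤ ε := by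
        rw [inv_mul_le_iff₀ hr0]
        nlinarith

theorem sphere_approximation_general
    {H : Type*} [Group H]
    {V : Type*} [NormedAddCommGroup V] [NormedSpace ℝ V] [FiniteDimensional ℝ V]
    (π₁ : H → V) (hhom : ∀ g h : H, π₁ (g * h) = π₁ g + π₁ h)
    (ℓ : H → ℝ) (hnonneg : ∀ h, 0 ≤ ℓ h)
    (hsub : ∀ g h : H, ℓ (g * h) ≤ ℓ g + ℓ h)
    (hker : ∀ h : H, ℓ h = 0 → π₁ h = 0)
    (hball : {v : V | ‖v‖ ≤ 1} =
      closure (convexHull ℝ {w : V | ∃ h : H, 0 < ℓ h ∧ w = (ℓ h)⁻¹ • π₁ h})) :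
    ∀ ε : ℝ, 0 < ε → ∃ s₀ : ℝ, 0 < s₀ ∧ ∀ s : ℝ, s₀ < s → ∀ v : V, ‖v‖ = 1 →
      ∃ h : H, (1 - ε) * s ≤ ℓ h ∧ ℓ h ≤ (1 + ε) * s ∧
        ‖(ℓ h)⁻¹ • π₁ h - v‖ ≤ ε := by
  intro ε hε
  have hnorm := norm_le_of_unitBall_eq_closure_convexHull hnonneg hker hball
  have hhull : convexHull ℝ {w : V | ∃ h : H, 0 < ℓ h ∧ w = (ℓ h)⁻¹ • π₁ h} ⊆
      trackedDirections π₁ ℓ := by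
    refine convexHull_min ?_ (convex_trackedDirections hhom hsub)
    rintro _ ⟨g, hg, rfl⟩
    exact inv_smul_mem_trackedDirections hhom hsub hnorm hg
  have hsphere : sphere (0 : V) 1 ⊆ closure (trackedDirections π₁ ℓ) := fun v hv =>
    closure_mono hhull (hball ▸ (by simpa using hv.le : v ∈ {v : V | ‖v‖ ≤ 1}))
  obtain ⟨δ, hδ, hδε, hδ1⟩ : ∃ δ : ℝ, 0 < δ ∧ 8 * δ ≤ ε ∧ 8 * δ ≤ 1 :=
    ⟨min ε 1 / 8, by positivity, by linarith [min_le_left ε 1], by linarith [min_le_right ε 1]⟩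
  obtain ⟨C, hC⟩ := exists_uniform_tracking (isCompact_sphere 0 1) hsphere hδ
  refine ⟨max 1 (C / δ), by positivity, fun s hs v hv => ?_⟩
  have hs0 : 0 < s := by linarith [le_max_left 1 (C / δ)]
  have hCs : C < s * δ := (div_lt_iff₀ hδ).mp ((le_max_right _ _).trans_lt hs)
  obtain ⟨h, hπ, hℓ⟩ := hC v (by simpa using hv) s hs0.le
  have hsδ0 : 0 < s * δ := by positivity
  have hsδε : s * (8 * δ) ≤ s * ε := mul_le_mul_of_nonneg_left hδε hs0.le
  have hsδ1 : s * (8 * δ) ≤ s * 1 := mul_le_mul_of_nonneg_left hδ1 hs0.le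
  exact ⟨h, approximation_of_near_ray hv hs0 (by linarith) (by linarith) hπ (hnorm h)
    (by linarith)⟩

/-- **Approximation in the abelianized group** (Lemma 6.19). Let `H` be a group, `V` a
finite-dimensional real normed space, `π₁ : H → V` a homomorphism into the additive group of
`V`, and `ℓ : H → [0,∞)` a symmetric subadditive length function with `π₁(h) = 0` whenever
`ℓ(h) = 0`. Suppose the closed unit ball of the norm of `V` is the closed convex hull of the
points `π₁(h)/ℓ(h)`, `ℓ(h) > 0`. Then for every `ε > 0` there is `s₀ > 0` such that for every
`s > s₀` and every unit vector `v` there is `h ∈ H` with `(1−ε)s ≤ ℓ(h) ≤ (1+ε)s` and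
`‖π₁(h)/ℓ(h) − v‖ ≤ ε`. -/
theorem sphere_approximation
    {H : Type*} [Group H]
    {V : Type*} [NormedAddCommGroup V] [NormedSpace ℝ V] [FiniteDimensional ℝ V]
    (π₁ : H → V) (hhom : ∀ g h : H, π₁ (g * h) = π₁ g + π₁ h)
    (ℓ : H → ℝ) (hnonneg : ∀ h, 0 ≤ ℓ h)
    (hsymm : ∀ h : H, ℓ h⁻¹ = ℓ h)
    (hsub : ∀ g h : H, ℓ (g * h) ≤ ℓ g + ℓ h)
    (hker : ∀ h : H, ℓ h = 0 → π₁ h = 0)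
    (hball : {v : V | ‖v‖ ≤ 1} =
      closure (convexHull ℝ {w : V | ∃ h : H, 0 < ℓ h ∧ w = (ℓ h)⁻¹ • π₁ h})) :
    ∀ ε : ℝ, 0 < ε → ∃ s₀ : ℝ, 0 < s₀ ∧ ∀ s : ℝ, s₀ < s → ∀ v : V, ‖v‖ = 1 →
      ∃ h : H, (1 - ε) * s ≤ ℓ h ∧ ℓ h ≤ (1 + ε) * s ∧
        ‖(ℓ h)⁻¹ • π₁ h - v‖ ≤ ε :=
  sphere_approximation_general π₁ hhom ℓ hnonneg hsub hker hball
end
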